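/- Let T_1, T_2, ..., T_n be bounded linear operators on a complex Hilbert space H. Then ‖∑_{k=1}^n T_k‖² ≤ ∑_{j=1}^n ω( T_j* (∑_{k=1}^n T_k) ). -/

import Mathlib

open ContinuousLinearMap

/-- The numerical radius of a bounded linear operator on a complex Hilbert space:
`ω(T) = sup_{‖x‖ = 1} |⟨Tx, x⟩|`. -/
noncomputable def numRadius {H : Type*} [NormedAddCommGroup H] [InnerProductSpace ℂ H]
    (T : H →L[ℂ] H) : ℝ :=
  ⨆ x : {x : H // ‖x‖ = 1}, ‖(inner ℂ (T x) (x : H) : ℂ)‖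

/-! Since `‖Sx‖² = ⟨S*S x, x⟩`, the square of `‖∑ Tₖ‖` is at most the numerical radius of
`(∑ Tₖ)* (∑ Tₖ) = ∑ⱼ Tⱼ* (∑ Tₖ)`, and the numerical radius is subadditive. -/

section NumRadius

variable {H : Type*} [NormedAddCommGroup H] [InnerProductSpace ℂ H]

lemma numRadius_nonneg (T : H →L[ℂ] H) : 0 ≤ numRadius T :=
  Real.iSup_nonneg fun _ => norm_nonneg _

lemma norm_inner_le_numRadius (T : H →L[ℂ] H) {x : H} (hx : ‖x‖ = 1) :
    ‖(inner ℂ (T x) x : ℂ)‖ ≤ numRadius T := by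
  refine le_ciSup (f := fun y : {y : H // ‖y‖ = 1} => ‖(inner ℂ (T y) (y : H) : ℂ)‖)
    ⟨‖T‖, ?_⟩ ⟨x, hx⟩
  rintro _ ⟨y, rfl⟩
  calc ‖(inner ℂ (T y) (y : H) : ℂ)‖ ≤ ‖T y‖ * ‖(y : H)‖ := norm_inner_le_norm _ _
    _ ≤ ‖T‖ * ‖(y : H)‖ * ‖(y : H)‖ := by gcongr; exact T.le_opNorm _
    _ = ‖T‖ := by rw [y.2, mul_one, mul_one]

lemma numRadius_le {T : H →L[ℂ] H} {c : ℝ} (hc : 0 ≤ c)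
    (h : ∀ x : H, ‖x‖ = 1 → ‖(inner ℂ (T x) x : ℂ)‖ ≤ c) : numRadius T ≤ c :=
  Real.iSup_le (fun x => h x x.2) hc

lemma numRadius_sum_le {ι : Type*} (s : Finset ι) (T : ι → H →L[ℂ] H) :
    numRadius (∑ i ∈ s, T i) ≤ ∑ i ∈ s, numRadius (T i) := by
  refine numRadius_le (Finset.sum_nonneg fun i _ => numRadius_nonneg (T i)) fun x hx => ?_
  calc ‖(inner ℂ ((∑ i ∈ s, T i) x) x : ℂ)‖ = ‖∑ i ∈ s, (inner ℂ (T i x) x : ℂ)‖ := by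
        rw [sum_apply, sum_inner]
    _ ≤ ∑ i ∈ s, ‖(inner ℂ (T i x) x : ℂ)‖ := norm_sum_le _ _
    _ ≤ ∑ i ∈ s, numRadius (T i) := Finset.sum_le_sum fun i _ => norm_inner_le_numRadius _ hx

lemma sq_norm_le_numRadius_adjoint_comp_self [CompleteSpace H] (S : H →L[ℂ] H) :
    ‖S‖ ^ 2 ≤ numRadius (adjoint S ∘L S) := by
  have hS : ‖S‖ ≤ √(numRadius (adjoint S ∘L S)) := by
    refine opNorm_le_of_unit_norm (Real.sqrt_nonneg _) fun x hx => Real.le_sqrt_of_sq_le ?_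
    calc ‖S x‖ ^ 2 = RCLike.re (inner ℂ ((adjoint S ∘L S) x) x : ℂ) :=
          apply_norm_sq_eq_inner_adjoint_left S x
      _ ≤ ‖(inner ℂ ((adjoint S ∘L S) x) x : ℂ)‖ := RCLike.re_le_norm _
      _ ≤ numRadius (adjoint S ∘L S) := norm_inner_le_numRadius _ hx
  calc ‖S‖ ^ 2 ≤ √(numRadius (adjoint S ∘L S)) ^ 2 := by gcongr
    _ = numRadius (adjoint S ∘L S) := Real.sq_sqrt (numRadius_nonneg _)

end NumRadius

theorem norm_sq_sum_le_sum_numRadius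
    {H : Type*} [NormedAddCommGroup H] [InnerProductSpace ℂ H] [CompleteSpace H]
    (n : ℕ) (T : Fin n → H →L[ℂ] H) :
    ‖∑ k, T k‖ ^ 2 ≤ ∑ j, numRadius (adjoint (T j) ∘L (∑ k, T k)) := by
  have h : adjoint (∑ k, T k) ∘L (∑ k, T k) = ∑ j, adjoint (T j) ∘L (∑ k, T k) := by
    rw [map_sum, finsetSum_comp]
  calc ‖∑ k, T k‖ ^ 2 ≤ numRadius (adjoint (∑ k, T k) ∘L (∑ k, T k)) :=
        sq_norm_le_numRadius_adjoint_comp_self _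
    _ = numRadius (∑ j, adjoint (T j) ∘L (∑ k, T k)) := by rw [h]
    _ ≤ ∑ j, numRadius (adjoint (T j) ∘L (∑ k, T k)) := numRadius_sum_le _ _
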